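/- arXiv:2508.15155 — 4 statements merged into one kernel-verified Lean document; each statement's English description precedes it below -/
import Mathlib

section
/- Let T₁ > 0, K ∈ (1/3, 1), μ = (3K−1)/(1−K) and 𝔲₀ ∈ ℝ. Then there exists a unique function 𝔲 : [0, T₁) → ℝ that is continuous on [0, T₁), continuously differentiable on (0, T₁), satisfies 𝔲(0) = 𝔲₀, and solves the singular ODE 𝔲′(t) = t^{2μ−1}(μ − 3K + 1)/(t^{2μ} + (1−K)e^{2𝔲(t)}) for all t ∈ (0, T₁). Moreover, there exists a constant C > 0 such that |𝔲(t) − 𝔲₀| ≤ C t^{2μ} and |𝔲′(t)| ≤ C t^{2μ−1} for all t ∈ (0, T₁). -/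
noncomputable def auxG (c k y : ℝ) : ℝ := c * y ^ k - y

open Classical in
noncomputable def auxY (c k y₀ s : ℝ) : ℝ :=
  if h : ∃ y, y₀ ≤ y ∧ auxG c k y = s then h.choose else y₀

theorem auxG_hasDerivAt (c k : ℝ) {y : ℝ} (hy : y ≠ 0) :
    HasDerivAt (auxG c k) (c * (k * y ^ (k - 1)) - 1) y := by
  exact ((Real.hasDerivAt_rpow_const (p := k) (Or.inl hy)).const_mul c).sub
    (hasDerivAt_id y)

theorem auxG_y₀ {c k y₀ : ℝ} (hy₀ : 0 < y₀) (hc : c * y₀ ^ (k - 1) = 1) :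
    auxG c k y₀ = 0 := by
  have : (y₀:ℝ) ^ k = y₀ ^ (k - 1) * y₀ := by
    rw [← Real.rpow_add_one hy₀.ne']; ring_nf
  simp only [auxG, this]
  nlinarith [hc]

theorem auxG_deriv_lb {c k y₀ : ℝ} (hy₀ : 0 < y₀) (hk : 1 < k) (hc : c * y₀ ^ (k - 1) = 1)
    {y : ℝ} (hy : y₀ ≤ y) : k - 1 ≤ c * (k * y ^ (k - 1)) - 1 := by
  have hcpos : 0 < c := by
    have := Real.rpow_pos_of_pos hy₀ (k - 1)
    nlinarith
  have h1 : y₀ ^ (k - 1) ≤ y ^ (k - 1) :=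
    Real.rpow_le_rpow hy₀.le hy (by linarith)
  have h2 : (1:ℝ) ≤ c * y ^ (k - 1) := by
    calc (1:ℝ) = c * y₀ ^ (k-1) := hc.symm
    _ ≤ c * y ^ (k-1) := by nlinarith
  nlinarith

theorem auxG_contOn {c k y₀ : ℝ} (hy₀ : 0 < y₀) : ContinuousOn (auxG c k) (Set.Ici y₀) :=
  fun y hy => ((auxG_hasDerivAt c k (ne_of_gt (lt_of_lt_of_le hy₀ hy))).continuousAt).continuousWithinAt

theorem auxG_strictMonoOn {c k y₀ : ℝ} (hy₀ : 0 < y₀) (hk : 1 < k)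
    (hc : c * y₀ ^ (k - 1) = 1) : StrictMonoOn (auxG c k) (Set.Ici y₀) := by
  apply strictMonoOn_of_deriv_pos (convex_Ici y₀) (auxG_contOn hy₀)
  intro x hx
  rw [interior_Ici] at hx
  have hx0 : x ≠ 0 := ne_of_gt (lt_trans hy₀ hx)
  rw [(auxG_hasDerivAt c k hx0).deriv]
  have := auxG_deriv_lb hy₀ hk hc (le_of_lt hx)
  linarith

theorem auxG_linear_lb {c k y₀ : ℝ} (hy₀ : 0 < y₀) (hk : 1 < k) (hc : c * y₀ ^ (k - 1) = 1)
    {y : ℝ} (hy : y₀ ≤ y) : (k - 1) * (y - y₀) ≤ auxG c k y := by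
  set f : ℝ → ℝ := fun z => auxG c k z - (k - 1) * z with hf
  have hmono : MonotoneOn f (Set.Ici y₀) := by
    have hd : ∀ x ∈ Set.Ici y₀, HasDerivAt f (c * (k * x ^ (k-1)) - 1 - (k-1)) x := by
      intro x hx
      have hx0 : x ≠ 0 := ne_of_gt (lt_of_lt_of_le hy₀ hx)
      have := (auxG_hasDerivAt c k hx0).sub ((hasDerivAt_id x).const_mul (k-1))
      exact this.congr_deriv (by ring)
    apply monotoneOn_of_deriv_nonneg (convex_Ici y₀)
      (fun x hx => (hd x hx).continuousAt.continuousWithinAt)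
    · intro x hx
      rw [interior_Ici] at hx
      exact (hd x (Set.mem_Ici.2 (le_of_lt hx))).differentiableAt.differentiableWithinAt
    · intro x hx
      rw [interior_Ici] at hx
      rw [(hd x (Set.mem_Ici.2 (le_of_lt hx))).deriv]
      have := auxG_deriv_lb hy₀ hk hc (le_of_lt hx)
      linarith
  have h0 := hmono (Set.self_mem_Ici) hy hy
  have hg0 : auxG c k y₀ = 0 := auxG_y₀ hy₀ hc
  simp only [hf] at h0
  rw [hg0] at h0
  linarith

theorem auxY_exists {c k y₀ : ℝ} (hy₀ : 0 < y₀) (hk : 1 < k) (hc : c * y₀ ^ (k - 1) = 1)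
    {s : ℝ} (hs : 0 ≤ s) : ∃ y, y₀ ≤ y ∧ auxG c k y = s := by
  have hk1 : (0:ℝ) < k - 1 := by linarith
  have hdiv : 0 ≤ s / (k-1) := div_nonneg hs hk1.le
  set b : ℝ := y₀ + s / (k - 1) with hb
  have hby : y₀ ≤ b := by rw [hb]; linarith
  have hgb : s ≤ auxG c k b := by
    have h1 := auxG_linear_lb hy₀ hk hc hby
    have he : (k - 1) * (b - y₀) = s := by
      rw [hb]
      field_simp
      ring
    linarith
  have hmem : s ∈ Set.Icc (auxG c k y₀) (auxG c k b) := by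
    rw [auxG_y₀ hy₀ hc]; exact ⟨hs, hgb⟩
  have := intermediate_value_Icc hby ((auxG_contOn hy₀).mono Set.Icc_subset_Ici_self) hmem
  obtain ⟨y, hy, hgy⟩ := this
  exact ⟨y, hy.1, hgy⟩

theorem auxY_spec {c k y₀ : ℝ} (hy₀ : 0 < y₀) (hk : 1 < k) (hc : c * y₀ ^ (k - 1) = 1)
    {s : ℝ} (hs : 0 ≤ s) : y₀ ≤ auxY c k y₀ s ∧ auxG c k (auxY c k y₀ s) = s := by
  have h := auxY_exists hy₀ hk hc hs
  rw [auxY, dif_pos h]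
  exact h.choose_spec

theorem auxY_eq {c k y₀ : ℝ} (hy₀ : 0 < y₀) (hk : 1 < k) (hc : c * y₀ ^ (k - 1) = 1)
    {s y : ℝ} (hs : 0 ≤ s) (hy : y₀ ≤ y) (hgy : auxG c k y = s) : auxY c k y₀ s = y := by
  obtain ⟨h1, h2⟩ := auxY_spec hy₀ hk hc hs
  exact (auxG_strictMonoOn hy₀ hk hc).injOn h1 hy (hgy ▸ h2)

theorem auxY_zero {c k y₀ : ℝ} (hy₀ : 0 < y₀) (hk : 1 < k) (hc : c * y₀ ^ (k - 1) = 1) :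
    auxY c k y₀ 0 = y₀ :=
  auxY_eq hy₀ hk hc le_rfl le_rfl (auxG_y₀ hy₀ hc)

theorem auxY_ub {c k y₀ : ℝ} (hy₀ : 0 < y₀) (hk : 1 < k) (hc : c * y₀ ^ (k - 1) = 1)
    {s : ℝ} (hs : 0 ≤ s) : auxY c k y₀ s ≤ y₀ + s / (k - 1) := by
  obtain ⟨h1, h2⟩ := auxY_spec hy₀ hk hc hs
  have := auxG_linear_lb hy₀ hk hc h1
  rw [h2] at this
  have hk1 : (0:ℝ) < k - 1 := by linarith
  have := (le_div_iff₀ hk1).2 (by linarith : (auxY c k y₀ s - y₀) * (k-1) ≤ s)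
  linarith

theorem auxY_continuousWithinAt {c k y₀ : ℝ} (hy₀ : 0 < y₀) (hk : 1 < k)
    (hc : c * y₀ ^ (k - 1) = 1) {s : ℝ} (hs : 0 ≤ s) :
    ContinuousWithinAt (auxY c k y₀) (Set.Ici 0) s := by
  have hmem : ∀ᶠ s' in nhdsWithin s (Set.Ici 0), s' ∈ Set.Ici (0:ℝ) :=
    eventually_mem_nhdsWithin
  obtain ⟨hY1, hY2⟩ := auxY_spec hy₀ hk hc hs
  rw [ContinuousWithinAt]
  apply tendsto_order.2
  constructor
  · intro b hb
    rcases lt_or_ge b y₀ with hby | hby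
    · filter_upwards [hmem] with s' hs' using lt_of_lt_of_le hby (auxY_spec hy₀ hk hc hs').1
    · have hgb : auxG c k b < s := by
        have := (auxG_strictMonoOn hy₀ hk hc) hby (Set.mem_Ici.2 hY1) hb
        rwa [hY2] at this
      have hev : ∀ᶠ s' in nhdsWithin s (Set.Ici 0), auxG c k b < s' :=
        Filter.Eventually.filter_mono nhdsWithin_le_nhds (eventually_gt_nhds hgb)
      filter_upwards [hmem, hev] with s' hs' hgs'
      by_contra hcon
      push_neg at hcon
      have := (auxG_strictMonoOn hy₀ hk hc).monotoneOn (auxY_spec hy₀ hk hc hs').1 hby hcon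
      rw [(auxY_spec hy₀ hk hc hs').2] at this
      linarith
  · intro b hb
    have hby : y₀ ≤ b := le_of_lt (lt_of_le_of_lt hY1 hb)
    have hgb : s < auxG c k b := by
      have := (auxG_strictMonoOn hy₀ hk hc) (Set.mem_Ici.2 hY1) hby hb
      rwa [hY2] at this
    have hev : ∀ᶠ s' in nhdsWithin s (Set.Ici 0), s' < auxG c k b :=
      Filter.Eventually.filter_mono nhdsWithin_le_nhds (eventually_lt_nhds hgb)
    filter_upwards [hmem, hev] with s' hs' hgs'
    by_contra hcon
    push_neg at hcon
    have := (auxG_strictMonoOn hy₀ hk hc).monotoneOn hby (auxY_spec hy₀ hk hc hs').1 hcon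
    rw [(auxY_spec hy₀ hk hc hs').2] at this
    linarith

theorem auxY_continuousAt {c k y₀ : ℝ} (hy₀ : 0 < y₀) (hk : 1 < k)
    (hc : c * y₀ ^ (k - 1) = 1) {s : ℝ} (hs : 0 < s) :
    ContinuousAt (auxY c k y₀) s :=
  (auxY_continuousWithinAt hy₀ hk hc hs.le).continuousAt (Ici_mem_nhds hs)

theorem auxY_hasDerivAt {c k y₀ : ℝ} (hy₀ : 0 < y₀) (hk : 1 < k)
    (hc : c * y₀ ^ (k - 1) = 1) {s : ℝ} (hs : 0 < s) :
    HasDerivAt (auxY c k y₀) (c * (k * (auxY c k y₀ s) ^ (k - 1)) - 1)⁻¹ s := by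
  obtain ⟨hY1, hY2⟩ := auxY_spec hy₀ hk hc hs.le
  have hne : c * (k * (auxY c k y₀ s) ^ (k - 1)) - 1 ≠ 0 := by
    have := auxG_deriv_lb hy₀ hk hc hY1
    intro h; rw [h] at this; linarith
  apply HasDerivAt.of_local_left_inverse (auxY_continuousAt hy₀ hk hc hs)
    (auxG_hasDerivAt c k (ne_of_gt (lt_of_lt_of_le hy₀ hY1))) hne
  filter_upwards [eventually_gt_nhds hs] with s' hs'
  exact (auxY_spec hy₀ hk hc hs'.le).2

theorem aux_exp_lip {u v c : ℝ} (hu : u ≤ c) (hv : v ≤ c) :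
    |Real.exp u - Real.exp v| ≤ Real.exp c * |u - v| := by
  wlog h : v ≤ u generalizing u v
  · rw [abs_sub_comm, abs_sub_comm u v]; exact this hv hu (by linarith)
  have h1 : Real.exp u - Real.exp v ≤ Real.exp c * (u - v) := by
    have e1 : Real.exp u - Real.exp v = Real.exp u * (1 - Real.exp (v - u)) := by
      rw [mul_sub, mul_one, ← Real.exp_add]; ring_nf
    have e2 : 1 - Real.exp (v - u) ≤ u - v := by
      have := Real.add_one_le_exp (v - u); linarith
    have e3 : Real.exp u ≤ Real.exp c := Real.exp_le_exp.2 hu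
    calc Real.exp u - Real.exp v = Real.exp u * (1 - Real.exp (v - u)) := e1
      _ ≤ Real.exp u * (u - v) := by
          have := Real.exp_pos u
          nlinarith
      _ ≤ Real.exp c * (u - v) := by nlinarith
  have h2 : 0 ≤ Real.exp u - Real.exp v := by
    have := Real.exp_le_exp.2 h; linarith
  rw [abs_of_nonneg h2, abs_of_nonneg (by linarith : (0:ℝ) ≤ u - v)]
  exact h1

theorem aux_lip (K μ B : ℝ) (h1K : 0 < 1 - K) (hB : 0 < B) {M t a b : ℝ}
    (ht : 0 < t) (ha : |a| ≤ M) (hb : |b| ≤ M) :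
    |t ^ (2*μ - 1) * B / (t ^ (2*μ) + (1 - K) * Real.exp (2 * a)) -
      t ^ (2*μ - 1) * B / (t ^ (2*μ) + (1 - K) * Real.exp (2 * b))| ≤
    2 * B * (Real.exp (6*M) / (1 - K)) * t ^ (2*μ - 1) * |a - b| := by
  have hM : 0 ≤ M := le_trans (abs_nonneg a) ha
  have hts : 0 < t ^ (2*μ) := Real.rpow_pos_of_pos ht _
  have htp : 0 < t ^ (2*μ - 1) := Real.rpow_pos_of_pos ht _
  have ha' := abs_le.1 ha
  have hb' := abs_le.1 hb
  set Qa := t ^ (2*μ) + (1 - K) * Real.exp (2 * a) with hQa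
  set Qb := t ^ (2*μ) + (1 - K) * Real.exp (2 * b) with hQb
  have hQa0 : (1 - K) * Real.exp (-(2*M)) ≤ Qa := by
    have h1 : Real.exp (-(2*M)) ≤ Real.exp (2*a) := Real.exp_le_exp.2 (by linarith [ha'.1])
    have := Real.exp_pos (2*a); nlinarith
  have hQb0 : (1 - K) * Real.exp (-(2*M)) ≤ Qb := by
    have h1 : Real.exp (-(2*M)) ≤ Real.exp (2*b) := Real.exp_le_exp.2 (by linarith [hb'.1])
    have := Real.exp_pos (2*b); nlinarith
  have hQapos : 0 < Qa := lt_of_lt_of_le (by positivity) hQa0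
  have hQbpos : 0 < Qb := lt_of_lt_of_le (by positivity) hQb0
  have key : t ^ (2*μ - 1) * B / Qa - t ^ (2*μ - 1) * B / Qb
      = t ^ (2*μ - 1) * B * (Qb - Qa) / (Qa * Qb) := by
    field_simp
  rw [key, abs_div, abs_of_pos (by positivity : (0:ℝ) < Qa * Qb), abs_mul,
    abs_of_pos (by positivity : (0:ℝ) < t ^ (2*μ-1) * B),
    div_le_iff₀ (by positivity : (0:ℝ) < Qa * Qb)]
  have hQdiff : |Qb - Qa| ≤ 2 * |a - b| * ((1 - K) * Real.exp (2*M)) := by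
    have he : Qb - Qa = (1 - K) * (Real.exp (2*b) - Real.exp (2*a)) := by
      rw [hQa, hQb]; ring
    rw [he, abs_mul, abs_of_pos h1K]
    have hlip := aux_exp_lip (show 2*b ≤ 2*M by linarith [hb'.2])
      (show 2*a ≤ 2*M by linarith [ha'.2])
    have habs : |2*b - 2*a| = 2 * |a - b| := by
      rw [show 2*b - 2*a = -(2*(a-b)) by ring, abs_neg, abs_mul]
      norm_num
    rw [habs] at hlip
    nlinarith [abs_nonneg (a-b), Real.exp_pos (2*M)]
  have hQQ : ((1-K)*Real.exp (-(2*M))) * ((1-K)*Real.exp (-(2*M))) ≤ Qa * Qb :=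
    mul_le_mul hQa0 hQb0 (by positivity) hQapos.le
  have hE : Real.exp (6*M) * (Real.exp (-(2*M)) * Real.exp (-(2*M))) = Real.exp (2*M) := by
    rw [← Real.exp_add, ← Real.exp_add]
    ring_nf
  have main : (1-K)*Real.exp (2*M) ≤ Real.exp (6*M)/(1-K) * (Qa*Qb) := by
    rw [div_mul_eq_mul_div, le_div_iff₀ h1K]
    have h5 := mul_le_mul_of_nonneg_left hQQ (Real.exp_pos (6*M)).le
    have h6 : Real.exp (6*M) * ((1-K)*Real.exp (-(2*M)) * ((1-K)*Real.exp (-(2*M))))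
        = (1-K) * ((1-K) * Real.exp (2*M)) := by rw [← hE]; ring
    nlinarith [h5, h6]
  have c2 : 2 * |a - b| * ((1-K) * Real.exp (2*M))
      ≤ 2 * |a - b| * (Real.exp (6*M) / (1-K) * (Qa*Qb)) :=
    mul_le_mul_of_nonneg_left main (by positivity)
  have c3 : |Qb - Qa| ≤ 2 * |a - b| * (Real.exp (6*M) / (1-K) * (Qa*Qb)) :=
    le_trans hQdiff c2
  have c4 := mul_le_mul_of_nonneg_left c3
    (show (0:ℝ) ≤ t^(2*μ-1)*B by positivity)
  have c5 : t^(2*μ-1)*B*(2 * |a - b| * (Real.exp (6*M)/(1-K)*(Qa*Qb)))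
      = 2*B*(Real.exp (6*M)/(1-K))*t^(2*μ-1) * |a - b| * (Qa*Qb) := by ring
  linarith [c4, c5]

theorem aux_unique (T₁ K μ : ℝ) (hT₁ : 0 < T₁) (h1K : 0 < 1 - K) (hμpos : 0 < μ)
    (hB : 0 < μ - 3*K + 1) (u v : ℝ → ℝ)
    (hu_cont : ContinuousOn u (Set.Ico 0 T₁)) (hv_cont : ContinuousOn v (Set.Ico 0 T₁))
    (h00 : u 0 = v 0)
    (hu_deriv : ∀ t ∈ Set.Ioo (0:ℝ) T₁, HasDerivAt u
      (t ^ (2*μ - 1) * (μ - 3*K + 1) / (t ^ (2*μ) + (1 - K) * Real.exp (2 * u t))) t)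
    (hv_deriv : ∀ t ∈ Set.Ioo (0:ℝ) T₁, HasDerivAt v
      (t ^ (2*μ - 1) * (μ - 3*K + 1) / (t ^ (2*μ) + (1 - K) * Real.exp (2 * v t))) t) :
    Set.EqOn v u (Set.Ico 0 T₁) := by
  intro t₁ ht₁
  rcases eq_or_lt_of_le ht₁.1 with h0 | h0
  · rw [← h0]; exact h00.symm
  -- t₁ > 0
  have hsub : Set.Icc (0:ℝ) t₁ ⊆ Set.Ico 0 T₁ := fun x hx => ⟨hx.1, lt_of_le_of_lt hx.2 ht₁.2⟩
  obtain ⟨M₁, hM₁⟩ := (isCompact_Icc (a := (0:ℝ)) (b := t₁)).exists_bound_of_continuousOn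
    (hu_cont.mono hsub)
  obtain ⟨M₂, hM₂⟩ := (isCompact_Icc (a := (0:ℝ)) (b := t₁)).exists_bound_of_continuousOn
    (hv_cont.mono hsub)
  set M := max M₁ M₂ with hM
  have hMu : ∀ x ∈ Set.Icc (0:ℝ) t₁, |u x| ≤ M :=
    fun x hx => le_trans (hM₁ x hx) (le_max_left _ _)
  have hMv : ∀ x ∈ Set.Icc (0:ℝ) t₁, |v x| ≤ M :=
    fun x hx => le_trans (hM₂ x hx) (le_max_right _ _)
  set L : ℝ := 2 * (μ - 3*K + 1) * (Real.exp (6*M) / (1 - K)) with hL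
  have hLpos : 0 < L := by
    have := Real.exp_pos (6*M); positivity
  -- continuity of x ↦ x ^ (2μ)
  have hrpow_cont : Continuous fun x : ℝ => x ^ (2*μ) := by
    rw [continuous_iff_continuousAt]
    exact fun x => Real.continuousAt_rpow_const x (2*μ) (Or.inr (by positivity))
  set ψ : ℝ → ℝ := fun x => (v x - u x)^2 * Real.exp (-(L/μ) * x ^ (2*μ)) with hψ
  have hψcont : ContinuousOn ψ (Set.Icc 0 t₁) := by
    apply ContinuousOn.mul
    · exact (((hv_cont.mono hsub).sub (hu_cont.mono hsub)).pow 2)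
    · exact (Real.continuous_exp.comp ((continuous_const.mul hrpow_cont))).continuousOn
  have hψderiv : ∀ x ∈ Set.Ioo (0:ℝ) t₁,
      HasDerivAt ψ ((2 * (v x - u x) *
        ((x ^ (2*μ - 1) * (μ - 3*K + 1) / (x ^ (2*μ) + (1 - K) * Real.exp (2 * v x))) -
         (x ^ (2*μ - 1) * (μ - 3*K + 1) / (x ^ (2*μ) + (1 - K) * Real.exp (2 * u x))))) *
          Real.exp (-(L/μ) * x ^ (2*μ)) +
        (v x - u x)^2 * (Real.exp (-(L/μ) * x ^ (2*μ)) * (-(L/μ) * (2*μ * x ^ (2*μ - 1))))) x := by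
    intro x hx
    have hxT : x ∈ Set.Ioo (0:ℝ) T₁ := ⟨hx.1, lt_trans hx.2 ht₁.2⟩
    have hdh : HasDerivAt (fun y => v y - u y)
        ((x ^ (2*μ - 1) * (μ - 3*K + 1) / (x ^ (2*μ) + (1 - K) * Real.exp (2 * v x))) -
         (x ^ (2*μ - 1) * (μ - 3*K + 1) / (x ^ (2*μ) + (1 - K) * Real.exp (2 * u x)))) x :=
      (hv_deriv x hxT).sub (hu_deriv x hxT)
    have hsq := hdh.pow 2
    have hin : HasDerivAt (fun y : ℝ => -(L/μ) * y ^ (2*μ)) (-(L/μ) * (2*μ * x ^ (2*μ-1))) x :=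
      (Real.hasDerivAt_rpow_const (p := 2*μ) (Or.inl hx.1.ne')).const_mul (-(L/μ))
    have hexp := hin.exp
    have := hsq.mul hexp
    exact this.congr_deriv (by simp only [Nat.cast_ofNat, Nat.reduceSub, pow_one, Pi.pow_apply])
  have hψanti : AntitoneOn ψ (Set.Icc 0 t₁) := by
    apply antitoneOn_of_deriv_nonpos (convex_Icc 0 t₁) hψcont
    · intro x hx
      rw [interior_Icc] at hx
      exact (hψderiv x hx).differentiableAt.differentiableWithinAt
    · intro x hx
      rw [interior_Icc] at hx
      rw [(hψderiv x hx).deriv]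
      -- show the value is ≤ 0
      set h := v x - u x with hh
      set d := (x ^ (2*μ - 1) * (μ - 3*K + 1) / (x ^ (2*μ) + (1 - K) * Real.exp (2 * v x))) -
         (x ^ (2*μ - 1) * (μ - 3*K + 1) / (x ^ (2*μ) + (1 - K) * Real.exp (2 * u x))) with hd
    -- |d| ≤ L x^{2μ-1} |h|
      have hxIcc : x ∈ Set.Icc (0:ℝ) t₁ := ⟨hx.1.le, hx.2.le⟩
      have hlip := aux_lip K μ (μ - 3*K + 1) h1K hB hx.1 (hMv x hxIcc) (hMu x hxIcc)
      rw [← hd] at hlip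
      have habs : |v x - u x| = |h| := by rw [hh]
      have hdle : |d| ≤ L * x ^ (2*μ-1) * |h| := by
        rw [hL]
        calc |d| ≤ 2 * (μ - 3*K + 1) * (Real.exp (6*M) / (1 - K)) * x ^ (2*μ-1) * |v x - u x| :=
              hlip
          _ = 2 * (μ - 3*K + 1) * (Real.exp (6*M) / (1 - K)) * x ^ (2*μ-1) * |h| := by
              rw [habs]
      have hE0 : 0 < Real.exp (-(L/μ) * x ^ (2*μ)) := Real.exp_pos _
      have hhd : h * d ≤ L * x ^ (2*μ-1) * h^2 := by
        calc h * d ≤ |h * d| := le_abs_self _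
          _ = |h| * |d| := abs_mul _ _
          _ ≤ |h| * (L * x ^ (2*μ-1) * |h|) := by
              apply mul_le_mul_of_nonneg_left hdle (abs_nonneg _)
          _ = L * x ^ (2*μ-1) * (|h| * |h|) := by ring
          _ = L * x ^ (2*μ-1) * h^2 := by rw [abs_mul_abs_self, sq]
      have hLμ : L / μ * (2 * μ) = 2 * L := by field_simp
      have hfinal : 2 * h * d * Real.exp (-(L/μ) * x ^ (2*μ)) +
          h^2 * (Real.exp (-(L/μ) * x ^ (2*μ)) * (-(L/μ) * (2*μ * x ^ (2*μ-1)))) ≤ 0 := by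
        have he : h^2 * (Real.exp (-(L/μ) * x ^ (2*μ)) * (-(L/μ) * (2*μ * x ^ (2*μ-1)))) =
            -(2 * L * x ^ (2*μ-1) * h^2) * Real.exp (-(L/μ) * x ^ (2*μ)) := by
          field_simp
        rw [he]
        have : 2 * h * d - 2 * L * x ^ (2*μ-1) * h^2 ≤ 0 := by linarith
        nlinarith [mul_le_mul_of_nonneg_right this hE0.le]
      calc 2 * h * d * Real.exp (-(L/μ) * x ^ (2*μ)) +
          h^2 * (Real.exp (-(L/μ) * x ^ (2*μ)) * (-(L/μ) * (2*μ * x ^ (2*μ-1)))) ≤ 0 := hfinal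
        _ = 0 := rfl
  have h1 := hψanti (Set.left_mem_Icc.2 h0.le) (Set.right_mem_Icc.2 h0.le) h0.le
  have hψ0 : ψ 0 = 0 := by
    simp [hψ, h00]
  have hψt₁ : 0 ≤ ψ t₁ := mul_nonneg (sq_nonneg _) (Real.exp_pos _).le
  have hzero : ψ t₁ = 0 := le_antisymm (hψ0 ▸ h1) hψt₁
  have hEne : Real.exp (-(L/μ) * t₁ ^ (2*μ)) ≠ 0 := (Real.exp_pos _).ne'
  have hsq : (v t₁ - u t₁)^2 = 0 := by
    rcases mul_eq_zero.1 hzero with h | h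
    · exact h
    · exact absurd h hEne
  have := pow_eq_zero_iff (n := 2) (by norm_num) |>.1 hsq
  linarith [this]

/-- Let `T₁ > 0`, `K ∈ (1/3, 1)`, `μ = (3K−1)/(1−K)` and `𝔲₀ ∈ ℝ`. Then there exists a unique
function `𝔲 : [0, T₁) → ℝ` that is continuous on `[0, T₁)`, continuously differentiable on
`(0, T₁)`, satisfies `𝔲(0) = 𝔲₀`, and solves the singular ODE
`𝔲′(t) = t^{2μ−1}(μ − 3K + 1)/(t^{2μ} + (1−K)e^{2𝔲(t)})` for all `t ∈ (0, T₁)`.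
Moreover, there exists `C > 0` with `|𝔲(t) − 𝔲₀| ≤ C t^{2μ}` and `|𝔲′(t)| ≤ C t^{2μ−1}`
for all `t ∈ (0, T₁)`. -/
theorem stmt_0 (T₁ K μ 𝔲₀ : ℝ) (hT₁ : 0 < T₁) (hK₁ : 1/3 < K) (hK₂ : K < 1)
    (hμ : μ = (3*K - 1)/(1 - K)) :
    ∃ 𝔲 : ℝ → ℝ,
      (ContinuousOn 𝔲 (Set.Ico 0 T₁) ∧
        𝔲 0 = 𝔲₀ ∧
        (∀ t ∈ Set.Ioo (0:ℝ) T₁,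
          HasDerivAt 𝔲
            (t ^ (2*μ - 1) * (μ - 3*K + 1) /
              (t ^ (2*μ) + (1 - K) * Real.exp (2 * 𝔲 t))) t) ∧
        ContinuousOn (deriv 𝔲) (Set.Ioo 0 T₁)) ∧
      (∀ 𝔳 : ℝ → ℝ,
        (ContinuousOn 𝔳 (Set.Ico 0 T₁) ∧
          𝔳 0 = 𝔲₀ ∧
          (∀ t ∈ Set.Ioo (0:ℝ) T₁,
            HasDerivAt 𝔳
              (t ^ (2*μ - 1) * (μ - 3*K + 1) /
                (t ^ (2*μ) + (1 - K) * Real.exp (2 * 𝔳 t))) t)) →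
        Set.EqOn 𝔳 𝔲 (Set.Ico 0 T₁)) ∧
      ∃ C : ℝ, 0 < C ∧ ∀ t ∈ Set.Ioo (0:ℝ) T₁,
        |𝔲 t - 𝔲₀| ≤ C * t ^ (2*μ) ∧ |deriv 𝔲 t| ≤ C * t ^ (2*μ - 1) := by
  have hK0 : (0:ℝ) < K := by linarith
  have h1K : (0:ℝ) < 1 - K := by linarith
  have h3K : (0:ℝ) < 3*K - 1 := by linarith
  have hμpos : 0 < μ := by rw [hμ]; positivity
  have hμ1K : μ * (1 - K) = 3*K - 1 := by rw [hμ]; field_simp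
  have hKμ : μ - 3*K + 1 = K * μ := by nlinarith [hμ1K]
  have hBpos : 0 < μ - 3*K + 1 := by rw [hKμ]; positivity
  set k : ℝ := 1/K with hkdef
  have hk : 1 < k := by
    rw [hkdef]
    exact one_lt_one_div hK0 hK₂
  have hKk : K * k = 1 := by rw [hkdef]; field_simp
  set y₀ : ℝ := Real.exp (2*𝔲₀) with hy₀def
  have hy₀ : 0 < y₀ := Real.exp_pos _
  set c : ℝ := y₀ ^ (1 - k) with hcdef
  have hc : c * y₀ ^ (k - 1) = 1 := by
    rw [hcdef, ← Real.rpow_add hy₀]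
    norm_num
  set 𝔲 : ℝ → ℝ := fun t => Real.log (auxY c k y₀ (t ^ (2*μ))) / 2 with h𝔲def
  have h𝔲0 : 𝔲 0 = 𝔲₀ := by
    rw [h𝔲def]
    simp only
    rw [Real.zero_rpow (by positivity : 2*μ ≠ 0), auxY_zero hy₀ hk hc, hy₀def,
      Real.log_exp]
    ring
  have hderiv : ∀ t ∈ Set.Ioo (0:ℝ) T₁, HasDerivAt 𝔲
      (t ^ (2*μ - 1) * (μ - 3*K + 1) /
        (t ^ (2*μ) + (1 - K) * Real.exp (2 * 𝔲 t))) t := by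
    intro t ht
    have ht0 : 0 < t := ht.1
    have hs : 0 < t ^ (2*μ) := Real.rpow_pos_of_pos ht0 _
    obtain ⟨hY1, hY2⟩ := auxY_spec hy₀ hk hc hs.le
    set y := auxY c k y₀ (t ^ (2*μ)) with hydef
    have hYpos : 0 < y := lt_of_lt_of_le hy₀ hY1
    have hYd := auxY_hasDerivAt hy₀ hk hc hs
    have hts : HasDerivAt (fun x : ℝ => x ^ (2*μ)) (2*μ * t ^ (2*μ - 1)) t :=
      Real.hasDerivAt_rpow_const (Or.inl ht0.ne')
    have hcomp := HasDerivAt.comp t hYd hts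
    have hlog := HasDerivAt.comp t (Real.hasDerivAt_log hYpos.ne') hcomp
    have hdiv := hlog.div_const 2
    have hgp : 0 < c * (k * y ^ (k-1)) - 1 := by
      have := auxG_deriv_lb hy₀ hk hc hY1
      linarith
    have hexp : Real.exp (2 * 𝔲 t) = y := by
      rw [h𝔲def]
      simp only [← hydef]
      rw [mul_div_cancel₀ _ (by norm_num : (2:ℝ) ≠ 0), Real.exp_log hYpos]
    have hyk : y ^ (k-1) * y = y ^ k := by
      rw [← Real.rpow_add_one hYpos.ne']
      ring_nf
    have hgy : c * y ^ k - y = t ^ (2*μ) := hY2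
    have hval : y⁻¹ * ((c * (k * y ^ (k-1)) - 1)⁻¹ * (2*μ * t ^ (2*μ - 1))) / 2
        = t ^ (2*μ - 1) * (μ - 3*K + 1) /
          (t ^ (2*μ) + (1 - K) * Real.exp (2 * 𝔲 t)) := by
      rw [hexp, ← hgy, hKμ]
      have hden : c * y ^ k - y + (1 - K) * y = c * y ^ k - K * y := by ring
      rw [hden]
      have hden2 : c * y ^ k - K * y = K * (y * (c * (k * y ^ (k-1)) - 1)) := by
        have : y * (c * (k * y ^ (k-1))) = c * (k * y ^ k) := by
          rw [← hyk]; ring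
        nlinarith [this, hKk]
      rw [hden2]
      rw [div_eq_div_iff (by positivity) (by positivity)]
      field_simp
      exact div_self (by rw [mul_assoc]; exact hgp.ne')
    rw [← hval]
    exact hdiv
  have hcont : ContinuousOn 𝔲 (Set.Ico 0 T₁) := by
    intro t ht
    rcases eq_or_lt_of_le ht.1 with h0 | h0
    · rw [← h0]
      have hinner : ContinuousWithinAt (fun x : ℝ => x ^ (2*μ)) (Set.Ico 0 T₁) 0 :=
        (Real.continuousAt_rpow_const 0 _ (Or.inr (by positivity))).continuousWithinAt
      have houter : ContinuousWithinAt (fun s => Real.log (auxY c k y₀ s) / 2)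
          (Set.Ici 0) ((0:ℝ) ^ (2*μ)) := by
        rw [Real.zero_rpow (by positivity : 2*μ ≠ 0)]
        have hY0 : auxY c k y₀ 0 = y₀ := auxY_zero hy₀ hk hc
        have h1 : ContinuousWithinAt (auxY c k y₀) (Set.Ici 0) 0 :=
          auxY_continuousWithinAt hy₀ hk hc le_rfl
        have h2 : ContinuousAt Real.log (auxY c k y₀ 0) :=
          Real.continuousAt_log (by rw [hY0]; exact hy₀.ne')
        exact (h2.comp_continuousWithinAt h1).div_const 2
      exact ContinuousWithinAt.comp (g := fun s => Real.log (auxY c k y₀ s) / 2)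
        (f := fun x : ℝ => x ^ (2*μ)) houter hinner
        (fun x (hx : x ∈ Set.Ico 0 T₁) => Real.rpow_nonneg hx.1 _)
    · exact (hderiv t ⟨h0, ht.2⟩).continuousAt.continuousWithinAt
  have hF : ContinuousOn (fun t => t ^ (2*μ - 1) * (μ - 3*K + 1) /
      (t ^ (2*μ) + (1 - K) * Real.exp (2 * 𝔲 t))) (Set.Ioo 0 T₁) := by
    apply ContinuousOn.div
    · apply ContinuousOn.mul _ continuousOn_const
      intro t ht
      exact (Real.continuousAt_rpow_const t _ (Or.inl ht.1.ne')).continuousWithinAt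
    · apply ContinuousOn.add
      · intro t ht
        exact (Real.continuousAt_rpow_const t _ (Or.inl ht.1.ne')).continuousWithinAt
      · exact continuousOn_const.mul (Real.continuous_exp.comp_continuousOn
          (continuousOn_const.mul (hcont.mono Set.Ioo_subset_Ico_self)))
    · intro t ht
      have h1 := Real.rpow_pos_of_pos ht.1 (2*μ)
      have h2 := Real.exp_pos (2 * 𝔲 t)
      nlinarith
  have hdc : ContinuousOn (deriv 𝔲) (Set.Ioo 0 T₁) :=
    hF.congr (fun t ht => (hderiv t ht).deriv)
  have hC₁ : (0:ℝ) < 1/(2*(k-1)*y₀) := by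
    have : (0:ℝ) < k - 1 := by linarith
    positivity
  have hC₂ : (0:ℝ) < K*μ/((1-K)*y₀) := by positivity
  refine ⟨𝔲, ⟨hcont, h𝔲0, hderiv, hdc⟩, ?_, ?_⟩
  · intro 𝔳 h𝔳
    exact aux_unique T₁ K μ hT₁ h1K hμpos hBpos 𝔲 𝔳 hcont h𝔳.1
      (by rw [h𝔲0, h𝔳.2.1]) hderiv h𝔳.2.2
  · refine ⟨max (1/(2*(k-1)*y₀)) (K*μ/((1-K)*y₀)), lt_of_lt_of_le hC₁ (le_max_left _ _), ?_⟩
    intro t ht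
    have ht0 : 0 < t := ht.1
    have hs : 0 < t ^ (2*μ) := Real.rpow_pos_of_pos ht0 _
    have htp : 0 < t ^ (2*μ - 1) := Real.rpow_pos_of_pos ht0 _
    obtain ⟨hY1, hY2⟩ := auxY_spec hy₀ hk hc hs.le
    have hYub := auxY_ub hy₀ hk hc hs.le
    set y := auxY c k y₀ (t ^ (2*μ)) with hydef
    have hYpos : 0 < y := lt_of_lt_of_le hy₀ hY1
    have hexp : Real.exp (2 * 𝔲 t) = y := by
      rw [h𝔲def]
      simp only [← hydef]
      rw [mul_div_cancel₀ _ (by norm_num : (2:ℝ) ≠ 0), Real.exp_log hYpos]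
    have hlogy₀ : Real.log y₀ = 2*𝔲₀ := by rw [hy₀def, Real.log_exp]
    constructor
    · have hmono : Real.log y₀ ≤ Real.log y := Real.log_le_log hy₀ hY1
      have hlog1 : Real.log y - Real.log y₀ ≤ (y - y₀)/y₀ := by
        have h1 := Real.log_le_sub_one_of_pos (div_pos hYpos hy₀)
        rw [Real.log_div hYpos.ne' hy₀.ne'] at h1
        have : y / y₀ - 1 = (y - y₀)/y₀ := by field_simp
        linarith [this ▸ h1]
      have hyd : y - y₀ ≤ t ^ (2*μ) / (k-1) := by linarith
      have hk1 : (0:ℝ) < k - 1 := by linarith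
      have hub : 𝔲 t - 𝔲₀ ≤ 1/(2*(k-1)*y₀) * t ^ (2*μ) := by
        have h𝔲t : 𝔲 t = Real.log y / 2 := by rw [h𝔲def]
        have h2 : (y - y₀)/y₀ ≤ (t ^ (2*μ) / (k-1))/y₀ := by gcongr
        have h3 : (t ^ (2*μ) / (k-1))/y₀ = 2 * (1/(2*(k-1)*y₀) * t ^ (2*μ)) := by
          field_simp
        rw [h𝔲t]
        linarith [hlog1, h2, hlogy₀]
      have hlb : 0 ≤ 𝔲 t - 𝔲₀ := by
        have h𝔲t : 𝔲 t = Real.log y / 2 := by rw [h𝔲def]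
        rw [h𝔲t]
        linarith [hmono, hlogy₀]
      rw [abs_of_nonneg hlb]
      calc 𝔲 t - 𝔲₀ ≤ 1/(2*(k-1)*y₀) * t ^ (2*μ) := hub
        _ ≤ max (1/(2*(k-1)*y₀)) (K*μ/((1-K)*y₀)) * t ^ (2*μ) :=
            mul_le_mul_of_nonneg_right (le_max_left _ _) hs.le
    · rw [(hderiv t ht).deriv, hexp]
      have hden : (1-K)*y₀ ≤ t ^ (2*μ) + (1 - K) * y := by
        have h9 : (1-K)*y₀ ≤ (1-K)*y := mul_le_mul_of_nonneg_left hY1 h1K.le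
        linarith
      have hdenpos : (0:ℝ) < (1-K)*y₀ := mul_pos h1K hy₀
      have hnum : 0 ≤ t ^ (2*μ - 1) * (μ - 3*K + 1) := by positivity
      rw [abs_of_nonneg (div_nonneg hnum (by linarith))]
      calc t ^ (2*μ - 1) * (μ - 3*K + 1) / (t ^ (2*μ) + (1 - K) * y)
          ≤ t ^ (2*μ - 1) * (μ - 3*K + 1) / ((1-K)*y₀) := by gcongr
        _ = K*μ/((1-K)*y₀) * t ^ (2*μ - 1) := by rw [hKμ]; ring
        _ ≤ max (1/(2*(k-1)*y₀)) (K*μ/((1-K)*y₀)) * t ^ (2*μ - 1) :=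
            mul_le_mul_of_nonneg_right (le_max_right _ _) htp.le
end

section
/- Let K ∈ (1/3, 1), μ = (3K−1)/(1−K), and T > 0. If u : (0, T) → ℝ is differentiable and satisfies u′(t) = t^{2μ−1}(μ − 3K + 1)/(t^{2μ} + (1−K)e^{2u(t)}) for all t ∈ (0, T), then the function 𝔭(t) = (K/2)·ln(t^{2μ} + e^{2u(t)}) − u(t) has zero derivative on (0, T), i.e. 𝔭 is constant on (0, T). -/
/-- Let `K ∈ (1/3, 1)`, `μ = (3K−1)/(1−K)`, and `T > 0`. If `u : (0, T) → ℝ` is differentiable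
and satisfies `u′(t) = t^{2μ−1}(μ − 3K + 1)/(t^{2μ} + (1−K)e^{2u(t)})` for all `t ∈ (0, T)`,
then the function `𝔭(t) = (K/2)·ln(t^{2μ} + e^{2u(t)}) − u(t)` has zero derivative on `(0, T)`,
i.e. `𝔭` is constant on `(0, T)`. -/
theorem stmt_1 (K μ T : ℝ) (hK₁ : 1/3 < K) (hK₂ : K < 1)
    (hμ : μ = (3*K - 1)/(1 - K)) (hT : 0 < T)
    (u : ℝ → ℝ)
    (hu : ∀ t ∈ Set.Ioo (0:ℝ) T,
      HasDerivAt u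
        (t ^ (2*μ - 1) * (μ - 3*K + 1) /
          (t ^ (2*μ) + (1 - K) * Real.exp (2 * u t))) t) :
    (∀ t ∈ Set.Ioo (0:ℝ) T,
      HasDerivAt (fun s => K/2 * Real.log (s ^ (2*μ) + Real.exp (2 * u s)) - u s) 0 t) ∧
    ∃ c : ℝ, ∀ t ∈ Set.Ioo (0:ℝ) T,
      K/2 * Real.log (t ^ (2*μ) + Real.exp (2 * u t)) - u t = c := by
  have hK1 : (0:ℝ) < 1 - K := by linarith
  have hKμ : μ - 3*K + 1 = K*μ := by
    field_simp at hμ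
    nlinarith [hμ]
  have key : ∀ t ∈ Set.Ioo (0:ℝ) T,
      HasDerivAt (fun s => K/2 * Real.log (s ^ (2*μ) + Real.exp (2 * u s)) - u s) 0 t := by
    intro t ht
    set A : ℝ := t ^ (2*μ) with hA
    set B : ℝ := Real.exp (2 * u t) with hB
    set b : ℝ := t ^ (2*μ - 1) with hb
    have hApos : 0 < A := Real.rpow_pos_of_pos ht.1 _
    have hBpos : 0 < B := Real.exp_pos _
    set D : ℝ := b * (μ - 3*K + 1) / (A + (1 - K) * B) with hD
    have hden2 : A + (1 - K) * B ≠ 0 := by positivity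
    have h1 : HasDerivAt (fun s : ℝ => s ^ (2*μ)) (2*μ * b) t := by
      simpa [hb] using Real.hasDerivAt_rpow_const (p := 2*μ) (Or.inl ht.1.ne')
    have h2 : HasDerivAt (fun s : ℝ => Real.exp (2 * u s)) (B * (2 * D)) t := by
      exact (((hu t ht).const_mul 2).exp)
    have hsum := h1.add h2
    have hne : A + B ≠ 0 := by positivity
    have hlog := hsum.log hne
    have hfin := (hlog.const_mul (K/2)).sub (hu t ht)
    have hzero : K/2 * ((2*μ*b + B*(2*D)) / (A + B)) - D = 0 := by
      rw [hD, hKμ]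
      field_simp
      ring
    have hfin' : HasDerivAt (fun s => K/2 * Real.log (s ^ (2*μ) + Real.exp (2 * u s)) - u s)
        (K/2 * ((2*μ*b + B*(2*D)) / (A + B)) - D) t := hfin
    rw [hzero] at hfin'
    exact hfin'
  refine ⟨key, ?_⟩
  have hconv : Convex ℝ (Set.Ioo (0:ℝ) T) := convex_Ioo _ _
  have hmem : T/2 ∈ Set.Ioo (0:ℝ) T := ⟨by linarith, by linarith⟩
  refine ⟨K/2 * Real.log ((T/2) ^ (2*μ) + Real.exp (2 * u (T/2))) - u (T/2), fun t ht => ?_⟩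
  exact hconv.is_const_of_fderivWithin_eq_zero
    (fun x hx => ((key x hx).differentiableAt).differentiableWithinAt)
    (fun x hx => by
      rw [fderivWithin_of_isOpen isOpen_Ioo hx, ((key x hx).hasFDerivAt).fderiv]
      ext y; simp) ht hmem
end

section
/- With a = −28 + 25√2, b = (3/4)(−7 + 6√2), c = 12 − 21/√2, d = (1/9)(5 + √2), and g = (1/3)(−1 − √2), the 2×2 real symmetric matrices [[a, c], [c, b]] and [[d, g], [g, 1]] are both positive definite; equivalently, a > 0, ab − c² > 0, d > 0, and d − g² > 0. -/
lemma posDef_fin_two {a b c : ℝ} (ha : 0 < a) (hdet : 0 < a*b - c^2) :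
    (!![a, c; c, b] : Matrix (Fin 2) (Fin 2) ℝ).PosDef := by
  rw [Matrix.posDef_iff_dotProduct_mulVec]
  constructor
  · ext i j
    fin_cases i <;> fin_cases j <;> simp [Matrix.conjTranspose_apply]
  · intro x hx
    have hx0 : x 0 ≠ 0 ∨ x 1 ≠ 0 := by
      by_contra h
      push_neg at h
      apply hx
      ext i
      fin_cases i <;> simp [h.1, h.2]
    have key : dotProduct (star x) (Matrix.mulVec (!![a, c; c, b] : Matrix (Fin 2) (Fin 2) ℝ) x)
        = a * x 0 ^ 2 + 2 * c * x 0 * x 1 + b * x 1 ^ 2 := by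
      simp [dotProduct, Matrix.mulVec, Fin.sum_univ_two]
      ring
    rw [key]
    have h1 : a * (a * x 0 ^ 2 + 2 * c * x 0 * x 1 + b * x 1 ^ 2)
        = (a * x 0 + c * x 1)^2 + (a*b - c^2) * x 1 ^ 2 := by ring
    rcases eq_or_ne (x 1) 0 with h1' | h1'
    · rcases hx0 with h | h
      · have : 0 < x 0 ^ 2 := by positivity
        simp only [h1']
        nlinarith [mul_pos ha this]
      · exact absurd h1' h
    · have : 0 < x 1 ^ 2 := by positivity
      nlinarith [sq_nonneg (a * x 0 + c * x 1), mul_pos hdet this, mul_pos ha ha]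

/-- With `a = −28 + 25√2`, `b = (3/4)(−7 + 6√2)`, `c = 12 − 21/√2`, `d = (1/9)(5 + √2)`, and
`g = (1/3)(−1 − √2)`, the 2×2 real symmetric matrices `[[a, c], [c, b]]` and
`[[d, g], [g, 1]]` are both positive definite; equivalently, `a > 0`, `ab − c² > 0`,
`d > 0`, and `d − g² > 0`. -/
theorem stmt_3 (a b c d g : ℝ)
    (ha : a = -28 + 25 * Real.sqrt 2)
    (hb : b = 3/4 * (-7 + 6 * Real.sqrt 2))
    (hc : c = 12 - 21 / Real.sqrt 2)
    (hd : d = 1/9 * (5 + Real.sqrt 2))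
    (hg : g = 1/3 * (-1 - Real.sqrt 2)) :
    (!![a, c; c, b] : Matrix (Fin 2) (Fin 2) ℝ).PosDef ∧
    (!![d, g; g, 1] : Matrix (Fin 2) (Fin 2) ℝ).PosDef ∧
    0 < a ∧ 0 < a*b - c^2 ∧ 0 < d ∧ 0 < d - g^2 := by
  have hs2 : Real.sqrt 2 ^ 2 = 2 := Real.sq_sqrt (by norm_num)
  have hsnn : (0:ℝ) ≤ Real.sqrt 2 := Real.sqrt_nonneg 2
  have hlb : (7/5 : ℝ) < Real.sqrt 2 := by nlinarith
  have hub : Real.sqrt 2 < 10/7 := by nlinarith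
  have hspos : (0:ℝ) < Real.sqrt 2 := by linarith
  have hc' : c = 12 - 21 * Real.sqrt 2 / 2 := by
    rw [hc]
    field_simp
    nlinarith
  have hA : 0 < a := by rw [ha]; nlinarith
  have hAB : 0 < a*b - c^2 := by rw [ha, hb, hc']; nlinarith
  have hD : 0 < d := by rw [hd]; nlinarith
  have hDG : 0 < d - g^2 := by rw [hd, hg]; nlinarith
  refine ⟨posDef_fin_two hA hAB, posDef_fin_two hD ?_, hA, hAB, hD, hDG⟩
  nlinarith
end

section
/- Let K₁, K₂ ∈ (1/3, 1), ρ₁, ρ₂ > 0, ν₂ ∈ ℝ³ with 0 < |ν₂| < 1, x = |ν₂|², and c = ( −(1+K₁)ρ₁(1−x) + √( (1+K₁)²ρ₁²(1−x)² + 4(1+K₂)²ρ₂² x ) ) / ( 2(1+K₂)ρ₂ x ). Then c > 0 and c·|ν₂| < 1; consequently the vector ν₁ = −c ν₂ satisfies 0 < |ν₁| < 1. -/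
set_option maxHeartbeats 1000000 in
/-- Let `K₁, K₂ ∈ (1/3, 1)`, `ρ₁, ρ₂ > 0`, `ν₂ ∈ ℝ³` with `0 < |ν₂| < 1`, `x = |ν₂|²`, and
`c = ( −(1+K₁)ρ₁(1−x) + √( (1+K₁)²ρ₁²(1−x)² + 4(1+K₂)²ρ₂² x ) ) / ( 2(1+K₂)ρ₂ x )`.
Then `c > 0` and `c·|ν₂| < 1`; consequently the vector `ν₁ = −c ν₂` satisfies
`0 < |ν₁| < 1`. -/
theorem stmt_12 (K₁ K₂ ρ₁ ρ₂ : ℝ)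
    (hK₁ : 1/3 < K₁ ∧ K₁ < 1) (hK₂ : 1/3 < K₂ ∧ K₂ < 1)
    (hρ₁ : 0 < ρ₁) (hρ₂ : 0 < ρ₂)
    (ν₂ : Fin 3 → ℝ)
    (hν₂ : 0 < Real.sqrt (∑ i, ν₂ i ^ 2) ∧ Real.sqrt (∑ i, ν₂ i ^ 2) < 1)
    (x c : ℝ) (hx : x = ∑ i, ν₂ i ^ 2)
    (hc : c = (-(1 + K₁)*ρ₁*(1 - x) +
        Real.sqrt ((1 + K₁)^2*ρ₁^2*(1 - x)^2 + 4*(1 + K₂)^2*ρ₂^2*x)) /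
        (2*(1 + K₂)*ρ₂*x))
    (ν₁ : Fin 3 → ℝ) (hν₁ : ν₁ = fun i => -c * ν₂ i) :
    0 < c ∧ c * Real.sqrt (∑ i, ν₂ i ^ 2) < 1 ∧
    0 < Real.sqrt (∑ i, ν₁ i ^ 2) ∧ Real.sqrt (∑ i, ν₁ i ^ 2) < 1 := by
  obtain ⟨hs0, hs1⟩ := hν₂
  have hSnn : 0 ≤ ∑ i, ν₂ i ^ 2 := by positivity
  set s : ℝ := Real.sqrt (∑ i, ν₂ i ^ 2) with hsd
  clear_value s
  have hsq : s ^ 2 = ∑ i, ν₂ i ^ 2 := by rw [hsd]; exact Real.sq_sqrt hSnn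
  have hx0 : 0 < x := by rw [hx, ← hsq]; positivity
  have hx1 : x < 1 := by rw [hx, ← hsq]; nlinarith
  have ha : 0 < (1 + K₁) * ρ₁ := by nlinarith [hK₁.1]
  have hb : 0 < (1 + K₂) * ρ₂ := by nlinarith [hK₂.1]
  obtain ⟨a, hadef, ha⟩ : ∃ a, a = (1 + K₁) * ρ₁ ∧ 0 < a := ⟨_, rfl, ha⟩
  obtain ⟨b, hbdef, hb⟩ : ∃ b, b = (1 + K₂) * ρ₂ ∧ 0 < b := ⟨_, rfl, hb⟩
  obtain ⟨D, hDdef⟩ : ∃ D, D = a^2*(1-x)^2 + 4*b^2*x := ⟨_, rfl⟩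
  have hargs : (1 + K₁)^2*ρ₁^2*(1 - x)^2 + 4*(1 + K₂)^2*ρ₂^2*x = D := by
    rw [hDdef, hadef, hbdef]; ring
  have hc' : c = (-a*(1-x) + Real.sqrt D) / (2*b*x) := by
    rw [hc, hargs, hadef, hbdef]; ring
  have hbx : 0 < 4*b^2*x := by positivity
  have hDgt : (a*(1-x))^2 < D := by
    have : (a*(1-x))^2 = a^2*(1-x)^2 := by ring
    rw [this, hDdef]; linarith
  have hDnn : 0 ≤ D := le_of_lt (lt_of_le_of_lt (sq_nonneg _) hDgt)
  have hroot : a * (1 - x) < Real.sqrt D := by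
    rw [Real.lt_sqrt (by nlinarith)]
    exact hDgt
  have hden : 0 < 2 * b * x := by nlinarith [mul_pos hb hx0]
  have hxs : x = s ^ 2 := by rw [hsq, hx]
  have hcpos : 0 < c := by
    rw [hc']
    apply div_pos _ hden
    nlinarith
  have h1x : 0 < 1 - x := by linarith
  have hkey : Real.sqrt D < a * (1 - x) + 2 * b * s := by
    rw [Real.sqrt_lt' (by nlinarith [mul_pos (mul_pos ha h1x) (mul_pos hb hs0)])]
    nlinarith [hDdef, hxs, mul_pos (mul_pos (mul_pos ha hb) hs0) h1x]
  have hcs : c * s < 1 := by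
    rw [hc', div_mul_eq_mul_div, div_lt_one hden]
    nlinarith [hxs, mul_pos hb hx0]
  have hsum : ∑ i, ν₁ i ^ 2 = c ^ 2 * ∑ i, ν₂ i ^ 2 := by
    rw [hν₁]; simp [mul_pow, Finset.mul_sum]
  have hν₁s : Real.sqrt (∑ i, ν₁ i ^ 2) = c * s := by
    rw [hsum, Real.sqrt_mul (by positivity), Real.sqrt_sq hcpos.le, hsd]
  refine ⟨hcpos, hcs, ?_, ?_⟩
  · rw [hν₁s]; positivity
  · rw [hν₁s]; exact hcs
end
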